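/- Fix η > 0 and define, for s in the interval I_η = (0, 2η/σ²], the function t₁(s) = ( −[a² + 2σ²s(−a+η) − 1] − √Γ(s) )/(4σ²), where Γ(s) = 4σ⁴[(−a+η)² − 1]s² + 4σ²[(−a+η)(a² − 1) + 2η]s + (a² − 1)². Let η₁ = (a² − 1)/a and η₂ = (3a + √(a² + 8))/4. Then: (1) if 0 < η ≤ η₁, t₁ is an increasing function of s on I_η; (2) if η ≥ η₂, t₁ is a decreasing function of s on I_η; (3) if η₁ < η < η₂, then with s* = aη(η − η₁)/(σ²(1 − (η − a)²)) one has s* ∈ (0, 2η/σ²), t₁ is decreasing on (0, s*) and increasing on (s*, 2η/σ²), and the derivative of t₁ at s* equals 0. -/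

import Mathlib

/-- The discriminant `Γ(s)` of the quadratic associated with the sequence `β_ℓ`. -/
noncomputable def Gam (a σ η s : ℝ) : ℝ :=
  4 * σ ^ 4 * ((-a + η) ^ 2 - 1) * s ^ 2
    + 4 * σ ^ 2 * ((-a + η) * (a ^ 2 - 1) + 2 * η) * s + (a ^ 2 - 1) ^ 2

/-- The smaller root `t₁(s) = (−[a² + 2σ²s(−a+η) − 1] − √Γ(s))/(4σ²)`. -/
noncomputable def tOne (a σ η : ℝ) (s : ℝ) : ℝ :=
  (-(a ^ 2 + 2 * σ ^ 2 * s * (-a + η) - 1) - Real.sqrt (Gam a σ η s)) / (4 * σ ^ 2)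

/-!
Write `b = η - a`, `M = 2aη - (a² - 1)`, `x = σ²s`, `P = x - a` and `Q = critFactor a η x`, the
linear function of `x` vanishing at `x = σ²s*`. Then `Q = bM + (b² - 1)P`, `Γ = M² + 4PQ`, and
`t₁'(s) = -N / (2√Γ)` with `N = b(√Γ - M) + 2Q` (this is `tOneNum`). As `(b√Γ)² = (2Q - bM)² + 4PQ`,
the sign of `N = b√Γ + (2Q - bM)` is that of `b` where `PQ > 0` and that of `2Q - bM` where
`PQ < 0`. For `η ≤ η₁` and for `η ≥ η₂`, comparing these linear functions of `x` on `(0, 2η)`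
gives `N < 0`, resp. `N > 0`, throughout. In between, `b² < 1` and `N` has the sign of `Q`,
which changes sign exactly at `s*`. The threshold `η₂` is the larger root of
`2η² - 3aη + a² - 1 = Q(2η)/η`, where `s*` leaves `(0, 2η/σ²)`.
-/

open Real Set

def critFactor (a η x : ℝ) : ℝ := ((η - a) ^ 2 - 1) * x + η * (a * η - (a ^ 2 - 1))

noncomputable def tOneNum (a σ η s : ℝ) : ℝ :=
  (η - a) * (√(Gam a σ η s) - (2 * a * η - (a ^ 2 - 1))) + 2 * critFactor a η (σ ^ 2 * s)

section SignRules

variable {b M P Q S : ℝ}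

lemma sq_mul_eq_sq_add (hQ : Q = b * M + (b ^ 2 - 1) * P) (hS : S ^ 2 = M ^ 2 + 4 * P * Q) :
    (b * S) ^ 2 = (2 * Q - b * M) ^ 2 + 4 * P * Q := by
  linear_combination b ^ 2 * hS - 4 * Q * hQ

lemma mul_sub_add_two_mul_pos_of_pos (hQ : Q = b * M + (b ^ 2 - 1) * P)
    (hS : S ^ 2 = M ^ 2 + 4 * P * Q) (hb : 0 < b) (hS0 : 0 < S)
    (hPQ : 2 * Q - b * M < 0 → 0 < P * Q) : 0 < b * (S - M) + 2 * Q := by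
  rcases lt_or_ge (2 * Q - b * M) 0 with hL | hL
  · have hsq : (2 * Q - b * M) ^ 2 < (b * S) ^ 2 := by
      linarith [sq_mul_eq_sq_add hQ hS, hPQ hL]
    linarith [(abs_lt_of_sq_lt_sq' hsq (by positivity)).1]
  · nlinarith [mul_pos hb hS0]

lemma mul_sub_add_two_mul_pos_of_sq_lt_one (hQ : Q = b * M + (b ^ 2 - 1) * P)
    (hS : S ^ 2 = M ^ 2 + 4 * P * Q) (hb : b ^ 2 < 1) (hM : 0 < M) (hS0 : 0 ≤ S)
    (hQ0 : 0 < Q) : 0 < b * (S - M) + 2 * Q := by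
  rcases le_or_gt 0 P with hP | hP
  · have hbM : 0 < b * M := by nlinarith
    have hb0 : 0 < b := pos_of_mul_pos_left hbM hM.le
    have hSM : M ≤ S := (abs_le_of_sq_le_sq' (by nlinarith) hS0).2
    nlinarith
  · have hL : 0 < 2 * Q - b * M := by nlinarith
    have hsq : (b * S) ^ 2 < (2 * Q - b * M) ^ 2 := by
      nlinarith [sq_mul_eq_sq_add hQ hS]
    linarith [(abs_lt_of_sq_lt_sq' hsq hL.le).1]

end SignRules

section Polynomials

variable {a σ η s x : ℝ}

lemma critFactor_eq (a η x : ℝ) : critFactor a η x =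
    (η - a) * (2 * a * η - (a ^ 2 - 1)) + ((η - a) ^ 2 - 1) * (x - a) := by
  unfold critFactor; ring

lemma critFactor_two_mul (a η : ℝ) :
    critFactor a η (2 * η) = η * (2 * η ^ 2 - 3 * a * η + a ^ 2 - 1) := by
  unfold critFactor; ring

lemma Gam_eq (a σ η s : ℝ) : Gam a σ η s =
    (2 * a * η - (a ^ 2 - 1)) ^ 2 + 4 * (σ ^ 2 * s - a) * critFactor a η (σ ^ 2 * s) := by
  unfold Gam critFactor; ring

lemma Gam_pos (hx : σ ^ 2 * s ∈ Ioo 0 (2 * η)) : 0 < Gam a σ η s := by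
  have hGam : Gam a σ η s = (2 * (η - a) * (σ ^ 2 * s) + (a ^ 2 - 1)) ^ 2
      + 4 * (σ ^ 2 * s) * (2 * η - σ ^ 2 * s) := by
    unfold Gam; ring
  rw [hGam]
  nlinarith [mul_pos hx.1 (sub_pos.2 hx.2)]

lemma sub_mul_critFactor_pos_of_mul_le (ha : 1 < a) (hη : 0 < η) (h : a * η ≤ a ^ 2 - 1)
    (hx : x ∈ Ioo 0 (2 * η))
    (hL : 0 < 2 * critFactor a η x - (η - a) * (2 * a * η - (a ^ 2 - 1))) :
    0 < (x - a) * critFactor a η x := by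
  obtain ⟨hx0, hx2⟩ := hx
  have hK : η * (a * η - (a ^ 2 - 1)) ≤ 0 := mul_nonpos_of_nonneg_of_nonpos hη.le (by linarith)
  have hL' : 0 < ((η - a) ^ 2 - 1) * (2 * x - a) + η * (a * η - (a ^ 2 - 1)) := by
    unfold critFactor at hL; linarith
  unfold critFactor
  rcases lt_trichotomy ((η - a) ^ 2 - 1) 0 with hβ | hβ | hβ
  · have hQ : ((η - a) ^ 2 - 1) * x + η * (a * η - (a ^ 2 - 1)) < 0 := by nlinarith
    have hP : x - a < 0 := by nlinarith
    exact mul_pos_of_neg_of_neg hP hQ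
  · rw [hβ] at hL'; linarith
  · have hw : 0 ≤ a - 1 - η := by nlinarith [sq_nonneg (a - η - 1)]
    -- for `b² > 1` the left side of `hL'` increases with `x` and is negative already at `x = 2η`
    have hL2η : ((η - a) ^ 2 - 1) * (4 * η - a) + η * (a * η - (a ^ 2 - 1)) < 0 := by
      nlinarith [mul_pos hη hη, mul_nonneg hη.le hw, mul_nonneg hw hw,
        mul_nonneg hw (sq_nonneg (2 * η - a))]
    nlinarith

lemma sub_mul_critFactor_pos_of_le (ha : 1 < a) (hb : a < η)
    (hp : 0 ≤ 2 * η ^ 2 - 3 * a * η + a ^ 2 - 1) (hx : x ∈ Ioo 0 (2 * η))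
    (hL : 2 * critFactor a η x - (η - a) * (2 * a * η - (a ^ 2 - 1)) < 0) :
    0 < (x - a) * critFactor a η x := by
  obtain ⟨hx0, hx2⟩ := hx
  have hbM : 0 < (η - a) * (2 * a * η - (a ^ 2 - 1)) := mul_pos (by linarith) (by nlinarith)
  have hβ : (η - a) ^ 2 - 1 < 0 := by
    by_contra! hβ
    have : 0 < (η - a) * (a ^ 2 - 1) + 2 * η := by nlinarith
    unfold critFactor at hL; nlinarith
  have hP : 0 < x - a := by
    rw [critFactor_eq] at hL; nlinarith
  have hQ : 0 < critFactor a η x := by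
    have h2η := critFactor_two_mul a η
    unfold critFactor at h2η ⊢; nlinarith
  exact mul_pos hP hQ

end Polynomials

section Sign

variable {a σ η s : ℝ}

lemma sq_sqrt_Gam (hΓ : 0 < Gam a σ η s) : √(Gam a σ η s) ^ 2 =
    (2 * a * η - (a ^ 2 - 1)) ^ 2 + 4 * (σ ^ 2 * s - a) * critFactor a η (σ ^ 2 * s) := by
  rw [sq_sqrt hΓ.le, Gam_eq]

lemma tOneNum_neg_of_mul_le (ha : 1 < a) (hη : 0 < η) (h : a * η ≤ a ^ 2 - 1)
    (hx : σ ^ 2 * s ∈ Ioo 0 (2 * η)) : tOneNum a σ η s < 0 := by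
  have hΓ : 0 < Gam a σ η s := Gam_pos hx
  -- `(b, P, Q) ↦ (-b, -P, -Q)` preserves the hypotheses of the sign rules and negates `N`
  have key := mul_sub_add_two_mul_pos_of_pos (b := -(η - a)) (M := 2 * a * η - (a ^ 2 - 1))
    (P := -(σ ^ 2 * s - a)) (Q := -critFactor a η (σ ^ 2 * s)) (by rw [critFactor_eq]; ring)
    (by rw [sq_sqrt_Gam hΓ]; ring) (by nlinarith) (sqrt_pos.2 hΓ) fun hL => by
      rw [neg_mul_neg]
      exact sub_mul_critFactor_pos_of_mul_le ha hη h hx (by linarith)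
  unfold tOneNum; linarith

lemma tOneNum_pos_of_le (ha : 1 < a) (hb : a < η) (hp : 0 ≤ 2 * η ^ 2 - 3 * a * η + a ^ 2 - 1)
    (hx : σ ^ 2 * s ∈ Ioo 0 (2 * η)) : 0 < tOneNum a σ η s := by
  have hΓ : 0 < Gam a σ η s := Gam_pos hx
  exact mul_sub_add_two_mul_pos_of_pos (critFactor_eq a η _) (sq_sqrt_Gam hΓ) (by linarith)
    (sqrt_pos.2 hΓ) (sub_mul_critFactor_pos_of_le ha hb hp hx)

lemma tOneNum_pos_of_critFactor_pos (hb : (η - a) ^ 2 < 1) (hM : 0 < 2 * a * η - (a ^ 2 - 1))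
    (hΓ : 0 < Gam a σ η s) (hQ : 0 < critFactor a η (σ ^ 2 * s)) : 0 < tOneNum a σ η s :=
  mul_sub_add_two_mul_pos_of_sq_lt_one (critFactor_eq a η _) (sq_sqrt_Gam hΓ) hb hM
    (sqrt_nonneg _) hQ

lemma tOneNum_neg_of_critFactor_neg (hb : (η - a) ^ 2 < 1) (hM : 0 < 2 * a * η - (a ^ 2 - 1))
    (hΓ : 0 < Gam a σ η s) (hQ : critFactor a η (σ ^ 2 * s) < 0) : tOneNum a σ η s < 0 := by
  have key := mul_sub_add_two_mul_pos_of_sq_lt_one (b := -(η - a))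
    (M := 2 * a * η - (a ^ 2 - 1)) (P := -(σ ^ 2 * s - a)) (Q := -critFactor a η (σ ^ 2 * s))
    (by rw [critFactor_eq]; ring)
    (by rw [sq_sqrt_Gam hΓ]; ring) (by rwa [neg_sq]) hM (sqrt_nonneg _) (by linarith)
  unfold tOneNum; linarith

end Sign

section Calculus

variable {a σ η s : ℝ}

lemma hasDerivAt_Gam (a σ η s : ℝ) : HasDerivAt (Gam a σ η)
    (4 * σ ^ 2 * (2 * critFactor a η (σ ^ 2 * s) - (η - a) * (2 * a * η - (a ^ 2 - 1)))) s := by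
  unfold Gam
  exact ((((hasDerivAt_pow 2 s).const_mul _).add ((hasDerivAt_id' s).const_mul _)).add_const
    _).congr_deriv (by unfold critFactor; push_cast; ring)

lemma hasDerivAt_tOne (hσ : σ ≠ 0) (hΓ : 0 < Gam a σ η s) :
    HasDerivAt (tOne a σ η) (-tOneNum a σ η s / (2 * √(Gam a σ η s))) s := by
  have h : HasDerivAt (tOne a σ η) ((-(2 * σ ^ 2 * 1 * (-a + η)) - 4 * σ ^ 2 *
      (2 * critFactor a η (σ ^ 2 * s) - (η - a) * (2 * a * η - (a ^ 2 - 1))) /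
        (2 * √(Gam a σ η s))) / (4 * σ ^ 2)) s := by
    unfold tOne
    exact (((((hasDerivAt_id' s).const_mul _).mul_const _).const_add _).sub_const _).neg.sub
      ((hasDerivAt_Gam a σ η s).sqrt hΓ.ne') |>.div_const _
  convert h using 1
  have hS : √(Gam a σ η s) ≠ 0 := (sqrt_pos.2 hΓ).ne'
  unfold tOneNum
  field_simp
  ring

end Calculus

section Monotonicity

variable {a σ η : ℝ}

lemma continuous_tOne (a σ η : ℝ) : Continuous (tOne a σ η) := by
  unfold tOne Gam; fun_prop

lemma sq_mul_mem_Ioo (hσ : σ ≠ 0) {s : ℝ} (hs : s ∈ Ioo 0 (2 * η / σ ^ 2)) :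
    σ ^ 2 * s ∈ Ioo 0 (2 * η) := by
  have hσ2 : 0 < σ ^ 2 := by positivity
  exact ⟨mul_pos hσ2 hs.1, by rw [← lt_div_iff₀' hσ2]; exact hs.2⟩

lemma strictMonoOn_tOne (hσ : σ ≠ 0) {I : Set ℝ} (hI : Convex ℝ I)
    (hIη : interior I ⊆ Ioo 0 (2 * η / σ ^ 2)) (h : ∀ s ∈ interior I, tOneNum a σ η s < 0) :
    StrictMonoOn (tOne a σ η) I :=
  strictMonoOn_of_deriv_pos hI (continuous_tOne a σ η).continuousOn fun s hs => by
    have hΓ : 0 < Gam a σ η s := Gam_pos (sq_mul_mem_Ioo hσ (hIη hs))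
    rw [(hasDerivAt_tOne hσ hΓ).deriv]
    exact div_pos (neg_pos.2 (h s hs)) (by positivity)

lemma strictAntiOn_tOne (hσ : σ ≠ 0) {I : Set ℝ} (hI : Convex ℝ I)
    (hIη : interior I ⊆ Ioo 0 (2 * η / σ ^ 2)) (h : ∀ s ∈ interior I, 0 < tOneNum a σ η s) :
    StrictAntiOn (tOne a σ η) I :=
  strictAntiOn_of_deriv_neg hI (continuous_tOne a σ η).continuousOn fun s hs => by
    have hΓ : 0 < Gam a σ η s := Gam_pos (sq_mul_mem_Ioo hσ (hIη hs))
    rw [(hasDerivAt_tOne hσ hΓ).deriv]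
    exact div_neg_of_neg_of_pos (neg_neg_of_pos (h s hs)) (by positivity)

end Monotonicity

section Thresholds

variable {a η : ℝ}

lemma quad_eq_mul (a η : ℝ) : 2 * η ^ 2 - 3 * a * η + a ^ 2 - 1 =
    2 * (η - (3 * a + √(a ^ 2 + 8)) / 4) * (η - (3 * a - √(a ^ 2 + 8)) / 4) := by
  linear_combination (1 / 8) * sq_sqrt (by positivity : (0 : ℝ) ≤ a ^ 2 + 8)

lemma lt_three_mul_add_sqrt_div_four (ha : 0 ≤ a) : a < (3 * a + √(a ^ 2 + 8)) / 4 := by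
  have : a < √(a ^ 2 + 8) := (lt_sqrt ha).2 (by linarith)
  linarith

lemma quad_nonneg_of_le (h : (3 * a + √(a ^ 2 + 8)) / 4 ≤ η) :
    0 ≤ 2 * η ^ 2 - 3 * a * η + a ^ 2 - 1 := by
  rw [quad_eq_mul]
  have := sqrt_nonneg (a ^ 2 + 8)
  exact mul_nonneg (by linarith) (by linarith)

lemma quad_neg_of_lt (ha : 1 < a) (h1 : (a ^ 2 - 1) / a < η)
    (h2 : η < (3 * a + √(a ^ 2 + 8)) / 4) : 2 * η ^ 2 - 3 * a * η + a ^ 2 - 1 < 0 := by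
  have hs := sq_sqrt (by positivity : (0 : ℝ) ≤ a ^ 2 + 8)
  have hlt : 4 - a ^ 2 < a * √(a ^ 2 + 8) :=
    (abs_lt_of_sq_lt_sq' (by rw [mul_pow, hs]; nlinarith) (by positivity)).2
  have hr : (3 * a - √(a ^ 2 + 8)) / 4 < (a ^ 2 - 1) / a := by
    rw [lt_div_iff₀ (by linarith)]; linarith
  rw [quad_eq_mul]
  exact mul_neg_of_neg_of_pos (by linarith) (by linarith)

lemma sq_sub_lt_one_of_quad_neg (ha : 1 < a) (h1 : (a ^ 2 - 1) / a < η)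
    (hp : 2 * η ^ 2 - 3 * a * η + a ^ 2 - 1 < 0) : (η - a) ^ 2 < 1 := by
  rw [div_lt_iff₀ (by linarith)] at h1
  have hlow : -1 < η - a := by nlinarith
  have hhigh : η - a < 1 := by nlinarith
  nlinarith

end Thresholds

section CriticalPoint

variable {a σ η : ℝ}

noncomputable def critPoint (a σ η : ℝ) : ℝ :=
  a * η * (η - (a ^ 2 - 1) / a) / (σ ^ 2 * (1 - (η - a) ^ 2))

lemma critFactor_eq_mul_critPoint_sub (ha : a ≠ 0) (hσ : σ ≠ 0) (hb : 1 - (η - a) ^ 2 ≠ 0)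
    (s : ℝ) :
    critFactor a η (σ ^ 2 * s) = σ ^ 2 * (1 - (η - a) ^ 2) * (critPoint a σ η - s) := by
  unfold critFactor critPoint
  field_simp
  ring

lemma critPoint_mem_Ioo (ha : 0 < a) (hσ : σ ≠ 0) (hη : 0 < η) (h1 : (a ^ 2 - 1) / a < η)
    (hp : 2 * η ^ 2 - 3 * a * η + a ^ 2 - 1 < 0) (hb : (η - a) ^ 2 < 1) :
    critPoint a σ η ∈ Ioo 0 (2 * η / σ ^ 2) := by
  have hσ2 : 0 < σ ^ 2 := by positivity
  refine ⟨div_pos (mul_pos (mul_pos ha hη) (sub_pos.2 h1))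
    (mul_pos hσ2 (sub_pos.2 hb)), ?_⟩
  have h := critFactor_eq_mul_critPoint_sub ha.ne' hσ (sub_pos.2 hb).ne' (2 * η / σ ^ 2)
  rw [mul_div_cancel₀ _ hσ2.ne', critFactor_two_mul] at h
  nlinarith [mul_pos hσ2 (sub_pos.2 hb)]

lemma tOneNum_critPoint (ha : a ≠ 0) (hσ : σ ≠ 0) (hb : 1 - (η - a) ^ 2 ≠ 0)
    (hM : 0 < 2 * a * η - (a ^ 2 - 1)) : tOneNum a σ η (critPoint a σ η) = 0 := by
  have hQ := critFactor_eq_mul_critPoint_sub ha hσ hb (critPoint a σ η)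
  rw [sub_self, mul_zero] at hQ
  unfold tOneNum
  rw [Gam_eq, hQ, mul_zero, add_zero, sqrt_sq hM.le]
  ring

lemma strictAntiOn_tOne_Ioo_critPoint (ha : a ≠ 0) (hσ : σ ≠ 0) (hb : (η - a) ^ 2 < 1)
    (hM : 0 < 2 * a * η - (a ^ 2 - 1)) (hs₀ : critPoint a σ η < 2 * η / σ ^ 2) :
    StrictAntiOn (tOne a σ η) (Ioo 0 (critPoint a σ η)) := by
  refine strictAntiOn_tOne hσ (convex_Ioo _ _)
    (interior_Ioo.subset.trans (Ioo_subset_Ioo_right hs₀.le)) fun s hs => ?_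
  rw [interior_Ioo] at hs
  refine tOneNum_pos_of_critFactor_pos hb hM
    (Gam_pos (sq_mul_mem_Ioo hσ ⟨hs.1, hs.2.trans hs₀⟩)) ?_
  rw [critFactor_eq_mul_critPoint_sub ha hσ (sub_pos.2 hb).ne']
  exact mul_pos (by positivity) (sub_pos.2 hs.2)

lemma strictMonoOn_tOne_Ioo_critPoint (ha : a ≠ 0) (hσ : σ ≠ 0) (hb : (η - a) ^ 2 < 1)
    (hM : 0 < 2 * a * η - (a ^ 2 - 1)) (hs₀ : 0 < critPoint a σ η) :
    StrictMonoOn (tOne a σ η) (Ioo (critPoint a σ η) (2 * η / σ ^ 2)) := by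
  refine strictMonoOn_tOne hσ (convex_Ioo _ _)
    (interior_Ioo.subset.trans (Ioo_subset_Ioo_left hs₀.le)) fun s hs => ?_
  rw [interior_Ioo] at hs
  refine tOneNum_neg_of_critFactor_neg hb hM
    (Gam_pos (sq_mul_mem_Ioo hσ ⟨hs₀.trans hs.1, hs.2⟩)) ?_
  rw [critFactor_eq_mul_critPoint_sub ha hσ (sub_pos.2 hb).ne']
  exact mul_neg_of_pos_of_neg (mul_pos (by positivity) (sub_pos.2 hb)) (sub_neg.2 hs.1)

lemma hasDerivAt_tOne_critPoint (ha : a ≠ 0) (hσ : σ ≠ 0) (hb : 1 - (η - a) ^ 2 ≠ 0)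
    (hM : 0 < 2 * a * η - (a ^ 2 - 1)) (hs₀ : critPoint a σ η ∈ Ioo 0 (2 * η / σ ^ 2)) :
    HasDerivAt (tOne a σ η) 0 (critPoint a σ η) := by
  have h := hasDerivAt_tOne hσ (Gam_pos (a := a) (sq_mul_mem_Ioo hσ hs₀))
  rwa [tOneNum_critPoint ha hσ hb hM, neg_zero, zero_div] at h

end CriticalPoint

section Regimes

variable {a σ η : ℝ}

lemma strictMonoOn_tOne_of_mul_le (ha : 1 < a) (hσ : σ ≠ 0) (hη : 0 < η)
    (h : a * η ≤ a ^ 2 - 1) : StrictMonoOn (tOne a σ η) (Ioc 0 (2 * η / σ ^ 2)) :=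
  strictMonoOn_tOne hσ (convex_Ioc _ _) interior_Ioc.subset fun _ hs =>
    tOneNum_neg_of_mul_le ha hη h (sq_mul_mem_Ioo hσ (interior_Ioc.subset hs))

lemma strictAntiOn_tOne_of_le (ha : 1 < a) (hσ : σ ≠ 0)
    (h : (3 * a + √(a ^ 2 + 8)) / 4 ≤ η) : StrictAntiOn (tOne a σ η) (Ioc 0 (2 * η / σ ^ 2)) :=
  have hb : a < η := (lt_three_mul_add_sqrt_div_four (by linarith)).trans_le h
  strictAntiOn_tOne hσ (convex_Ioc _ _) interior_Ioc.subset fun _ hs =>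
    tOneNum_pos_of_le ha hb (quad_nonneg_of_le h) (sq_mul_mem_Ioo hσ (interior_Ioc.subset hs))

end Regimes

theorem statement11 (a σ η : ℝ) (ha : 1 < a) (hσ : 0 < σ) (hη : 0 < η) :
    -- (1) if 0 < η ≤ η₁, then t₁ is increasing in s on I_η = (0, 2η/σ²]
    (η ≤ (a ^ 2 - 1) / a →
      StrictMonoOn (tOne a σ η) (Set.Ioc 0 (2 * η / σ ^ 2))) ∧
    -- (2) if η ≥ η₂, then t₁ is decreasing in s on I_η
    ((3 * a + Real.sqrt (a ^ 2 + 8)) / 4 ≤ η →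
      StrictAntiOn (tOne a σ η) (Set.Ioc 0 (2 * η / σ ^ 2))) ∧
    -- (3) if η₁ < η < η₂, then with s* = aη(η − η₁)/(σ²(1 − (η − a)²)),
    -- s* ∈ (0, 2η/σ²), t₁ is decreasing on (0, s*), increasing on (s*, 2η/σ²),
    -- and the derivative of t₁ vanishes at s*
    ((a ^ 2 - 1) / a < η → η < (3 * a + Real.sqrt (a ^ 2 + 8)) / 4 →
      let sStar : ℝ := a * η * (η - (a ^ 2 - 1) / a) / (σ ^ 2 * (1 - (η - a) ^ 2))
      sStar ∈ Set.Ioo 0 (2 * η / σ ^ 2) ∧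
        StrictAntiOn (tOne a σ η) (Set.Ioo 0 sStar) ∧
        StrictMonoOn (tOne a σ η) (Set.Ioo sStar (2 * η / σ ^ 2)) ∧
        HasDerivAt (tOne a σ η) 0 sStar) := by
  have hσ0 : σ ≠ 0 := hσ.ne'
  have ha0 : 0 < a := by linarith
  refine ⟨fun h => strictMonoOn_tOne_of_mul_le ha hσ0 hη (by rwa [le_div_iff₀ ha0, mul_comm] at h),
    strictAntiOn_tOne_of_le ha hσ0, fun h1 h2 => ?_⟩
  have hp := quad_neg_of_lt ha h1 h2
  have hb := sq_sub_lt_one_of_quad_neg ha h1 hp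
  have hM : 0 < 2 * a * η - (a ^ 2 - 1) := by
    rw [div_lt_iff₀ ha0] at h1; nlinarith
  have hs₀ := critPoint_mem_Ioo ha0 hσ0 hη h1 hp hb
  exact ⟨hs₀, strictAntiOn_tOne_Ioo_critPoint ha0.ne' hσ0 hb hM hs₀.2,
    strictMonoOn_tOne_Ioo_critPoint ha0.ne' hσ0 hb hM hs₀.1,
    hasDerivAt_tOne_critPoint ha0.ne' hσ0 (sub_pos.2 hb).ne' hM hs₀⟩
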